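/- Let d_s : ℝ≥0 → ℝ be differentiable with ḋ_s(t) = h(t), where h is continuous, bounded, and h(t) → 0. Suppose the observer (equation 41) with gains k_{o1}, k_{o2} satisfying k_{o1} > 0 and w_{s0} k_{o2} > 0 is run against the plant ṡ = f_s(s)s + g_s(s)u_s + w_{s0} d_s. Then the estimation errors e_s = s - ŝ and e_d = d_s - d̂_s both converge to 0 as t → ∞. -/

import Mathlib

/-!
The errors `e = s - ŝ`, `d = d_s - d̂_s` obey the linear system `ė = -k₁ e + w d`,
`ḋ = -k₂ e + h`, whose characteristic polynomial `μ² + k₁ μ + w k₂` has two complex roots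
`μ₁, μ₂` with negative real parts. With `u = μ₁ e + w d` the system becomes the cascade
`u̇ = μ₁ u + w h`, `ė = μ₂ e + u`, and a scalar equation `ẋ = μ x + g` with `Re μ < 0` sends
inputs vanishing at infinity to solutions vanishing at infinity: multiplying by the
integrating factor `exp (-μ t)` gives `‖x t‖ ≤ exp (Re μ (t - T)) ‖x T‖ + sup_{[T,t]} ‖g‖ / |Re μ|`.
Finally `d = (u - μ₁ e) / w`.
-/

open Filter Set Topology

section LinearDecay

variable {E : Type*} [NormedAddCommGroup E] [NormedSpace ℂ E]

theorem norm_cexp_smul_sub_le_of_hasDerivAt_smul_add {μ : ℂ} (hμ : μ.re ≠ 0) {x g : ℝ → E}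
    {T t ε : ℝ} (hTt : T ≤ t) (hx : ∀ τ ∈ Icc T t, HasDerivAt x (μ • x τ + g τ) τ)
    (hg : ∀ τ ∈ Icc T t, ‖g τ‖ ≤ ε) :
    ‖Complex.exp (-(μ * (t - T))) • x t - x T‖ ≤
      ε * (Real.exp (-μ.re * (t - T)) - 1) / -μ.re := by
  set c : ℝ → ℂ := fun τ => Complex.exp (-(μ * (τ - T)))
  have hc_norm (τ : ℝ) : ‖c τ‖ = Real.exp (-μ.re * (τ - T)) := by
    simp [c, Complex.norm_exp]
  have hc_deriv (τ : ℝ) : HasDerivAt c (c τ * -μ) τ := by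
    simpa using (((hasDerivAt_id (τ : ℂ)).sub_const (T : ℂ)).const_mul μ).neg.comp_ofReal.cexp
  have hy (τ) (hτ : τ ∈ Icc T t) : HasDerivAt (fun σ => c σ • x σ - x T) (c τ • g τ) τ := by
    refine (((hc_deriv τ).smul (hx τ hτ)).sub_const (x T)).congr_deriv ?_
    rw [smul_add, smul_smul, mul_neg, neg_smul]
    abel
  have hB (τ : ℝ) : HasDerivAt (fun σ => ε * (Real.exp (-μ.re * (σ - T)) - 1) / -μ.re)
      (ε * Real.exp (-μ.re * (τ - T))) τ := by
    refine (((((hasDerivAt_id' τ).sub_const T).const_mul (-μ.re)).exp.sub_const 1).const_mul ε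
      |>.div_const (-μ.re)).congr_deriv ?_
    field_simp
  refine image_norm_le_of_norm_deriv_right_le_deriv_boundary
    (fun τ hτ => (hy τ hτ).continuousAt.continuousWithinAt)
    (fun τ hτ => (hy τ (Ico_subset_Icc_self hτ)).hasDerivWithinAt)
    (by simp [c]) hB (fun τ hτ => ?_) (right_mem_Icc.mpr hTt)
  rw [norm_smul, hc_norm, mul_comm]
  exact mul_le_mul_of_nonneg_right (hg τ (Ico_subset_Icc_self hτ)) (Real.exp_pos _).le

theorem norm_le_exp_mul_add_of_hasDerivAt_smul_add {μ : ℂ} (hμ : μ.re < 0) {x g : ℝ → E}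
    {T t ε : ℝ} (hTt : T ≤ t) (hx : ∀ τ ∈ Icc T t, HasDerivAt x (μ • x τ + g τ) τ)
    (hg : ∀ τ ∈ Icc T t, ‖g τ‖ ≤ ε) :
    ‖x t‖ ≤ Real.exp (μ.re * (t - T)) * ‖x T‖ + ε / -μ.re := by
  set y := Complex.exp (-(μ * (t - T))) • x t
  have hε : 0 ≤ ε := (norm_nonneg _).trans (hg T (left_mem_Icc.mpr hTt))
  have hx_eq : Complex.exp (μ * (t - T)) • y = x t := by
    rw [smul_smul, ← Complex.exp_add]; simp
  have hexp : Real.exp (μ.re * (t - T)) * Real.exp (-μ.re * (t - T)) = 1 := by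
    rw [← Real.exp_add]; simp
  calc ‖x t‖ = Real.exp (μ.re * (t - T)) * ‖y‖ := by
        conv_lhs => rw [← hx_eq]
        simp [norm_smul, Complex.norm_exp]
    _ ≤ Real.exp (μ.re * (t - T)) * (‖x T‖ + ε * (Real.exp (-μ.re * (t - T)) - 1) / -μ.re) := by
      gcongr
      exact (norm_le_insert' _ _).trans (add_le_add_right
        (norm_cexp_smul_sub_le_of_hasDerivAt_smul_add hμ.ne hTt hx hg) _)
    _ = Real.exp (μ.re * (t - T)) * ‖x T‖ + ε / -μ.re
          - Real.exp (μ.re * (t - T)) * (ε / -μ.re) := by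
      linear_combination (ε / -μ.re) * hexp
    _ ≤ Real.exp (μ.re * (t - T)) * ‖x T‖ + ε / -μ.re := by
      have := mul_nonneg (Real.exp_pos (μ.re * (t - T))).le (div_nonneg hε (neg_pos.mpr hμ).le)
      linarith

theorem tendsto_zero_of_hasDerivAt_smul_add {μ : ℂ} (hμ : μ.re < 0) {x g : ℝ → E}
    (hx : ∀ᶠ t in atTop, HasDerivAt x (μ • x t + g t) t) (hg : Tendsto g atTop (𝓝 0)) :
    Tendsto x atTop (𝓝 0) := by
  rw [NormedAddGroup.tendsto_nhds_zero] at hg ⊢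
  intro ε hε
  obtain ⟨T, hT⟩ := eventually_atTop.mp
    (hx.and (hg (-μ.re * (ε / 2)) (mul_pos (neg_pos.mpr hμ) (half_pos hε))))
  have hbound (t : ℝ) (ht : T ≤ t) : ‖x t‖ ≤ Real.exp (μ.re * (t - T)) * ‖x T‖ + ε / 2 := by
    refine (norm_le_exp_mul_add_of_hasDerivAt_smul_add hμ ht (fun τ hτ => (hT τ hτ.1).1)
      (fun τ hτ => (hT τ hτ.1).2.le)).trans_eq ?_
    rw [neg_mul, neg_div_neg_eq, mul_div_cancel_left₀ _ hμ.ne]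
  have hdecay : Tendsto (fun t => Real.exp (μ.re * (t - T)) * ‖x T‖) atTop (𝓝 0) := by
    have hlin : Tendsto (fun t : ℝ => μ.re * (t - T)) atTop atBot :=
      (tendsto_atTop_add_const_right atTop (-T) tendsto_id).const_mul_atTop_of_neg hμ
    simpa using (Real.tendsto_exp_atBot.comp hlin).mul_const ‖x T‖
  filter_upwards [eventually_ge_atTop T, hdecay.eventually_lt_const (half_pos hε)]
    with t ht hsmall
  linarith [hbound t ht]

end LinearDecay

theorem re_lt_zero_of_sq_add_mul_add_eq_zero {b c : ℝ} (hb : 0 < b) (hc : 0 < c) {μ : ℂ}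
    (hμ : μ ^ 2 + b * μ + c = 0) : μ.re < 0 := by
  have hre := congrArg Complex.re hμ
  have him := congrArg Complex.im hμ
  simp only [sq, Complex.add_re, Complex.add_im, Complex.mul_re, Complex.mul_im,
    Complex.ofReal_re, Complex.ofReal_im, Complex.zero_re, Complex.zero_im] at hre him
  by_contra! hnonneg
  have him0 : μ.im = 0 := by
    have : μ.im * (2 * μ.re + b) = 0 := by linear_combination him
    exact (mul_eq_zero.mp this).resolve_right (by positivity)
  nlinarith

theorem tendsto_zero_of_hasDerivAt_hurwitz {k₁ k₂ w : ℝ} (hk₁ : 0 < k₁) (hk₂ : 0 < w * k₂)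
    {e d h : ℝ → ℂ} (he : ∀ᶠ t in atTop, HasDerivAt e (-k₁ * e t + w * d t) t)
    (hd : ∀ᶠ t in atTop, HasDerivAt d (-k₂ * e t + h t) t) (hh : Tendsto h atTop (𝓝 0)) :
    Tendsto e atTop (𝓝 0) ∧ Tendsto d atTop (𝓝 0) := by
  obtain ⟨μ₁, hμ₁⟩ : ∃ μ : ℂ, μ ^ 2 + k₁ * μ + ((w * k₂ : ℝ) : ℂ) = 0 := by
    simpa [sq] using
      exists_quadratic_eq_zero (one_ne_zero (α := ℂ)) (IsAlgClosed.exists_eq_mul_self _)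
  set μ₂ : ℂ := -k₁ - μ₁
  have hμ₂ : μ₂ ^ 2 + k₁ * μ₂ + ((w * k₂ : ℝ) : ℂ) = 0 := by linear_combination hμ₁
  set u : ℝ → ℂ := fun t => μ₁ * e t + w * d t
  have hu : ∀ᶠ t in atTop, HasDerivAt u (μ₁ • u t + w * h t) t := by
    filter_upwards [he, hd] with t het hdt
    refine ((het.const_mul μ₁).add (hdt.const_mul (w : ℂ))).congr_deriv ?_
    push_cast at hμ₁
    simp only [u, smul_eq_mul]
    linear_combination (-e t) * hμ₁
  have hu0 : Tendsto u atTop (𝓝 0) :=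
    tendsto_zero_of_hasDerivAt_smul_add (re_lt_zero_of_sq_add_mul_add_eq_zero hk₁ hk₂ hμ₁) hu
      (by simpa using hh.const_mul (w : ℂ))
  have he' : ∀ᶠ t in atTop, HasDerivAt e (μ₂ • e t + u t) t :=
    he.mono fun t het => het.congr_deriv (by simp only [μ₂, u, smul_eq_mul]; ring)
  have he0 : Tendsto e atTop (𝓝 0) :=
    tendsto_zero_of_hasDerivAt_smul_add (re_lt_zero_of_sq_add_mul_add_eq_zero hk₁ hk₂ hμ₂) he' hu0
  refine ⟨he0, ?_⟩
  have hw : (w : ℂ) ≠ 0 := mod_cast left_ne_zero_of_mul hk₂.ne'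
  have hd_eq : (fun t => (w : ℂ)⁻¹ * (u t - μ₁ * e t)) = d := by
    funext t; simp only [u]; field_simp; ring
  simpa [hd_eq] using (hu0.sub (he0.const_mul μ₁)).const_mul (w : ℂ)⁻¹

theorem extended_observer_convergence_general (k₁ k₂ w : ℝ)
    (hk₁ : 0 < k₁) (hk₂ : 0 < w * k₂)
    (fs gs us s shat ds dhat h : ℝ → ℝ)
    (hvanish : Tendsto h atTop (nhds 0))
    (hds : ∀ t, 0 ≤ t → HasDerivAt ds (h t) t)
    (hplant : ∀ t, 0 ≤ t →
      HasDerivAt s (fs (s t) * s t + gs (s t) * us t + w * ds t) t)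
    (hobs₁ : ∀ t, 0 ≤ t → HasDerivAt shat
      (fs (s t) * s t + gs (s t) * us t + w * dhat t + k₁ * (s t - shat t)) t)
    (hobs₂ : ∀ t, 0 ≤ t → HasDerivAt dhat (k₂ * (s t - shat t)) t) :
    Tendsto (fun t => s t - shat t) atTop (nhds 0) ∧
      Tendsto (fun t => ds t - dhat t) atTop (nhds 0) := by
  have he : ∀ᶠ t in atTop, HasDerivAt (fun t => ((s t - shat t : ℝ) : ℂ))
      (-k₁ * ((s t - shat t : ℝ) : ℂ) + w * ((ds t - dhat t : ℝ) : ℂ)) t := by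
    filter_upwards [eventually_ge_atTop 0] with t ht
    exact ((hplant t ht).sub (hobs₁ t ht)).ofReal_comp.congr_deriv (by push_cast; ring)
  have hd : ∀ᶠ t in atTop, HasDerivAt (fun t => ((ds t - dhat t : ℝ) : ℂ))
      (-k₂ * ((s t - shat t : ℝ) : ℂ) + (h t : ℂ)) t := by
    filter_upwards [eventually_ge_atTop 0] with t ht
    exact ((hds t ht).sub (hobs₂ t ht)).ofReal_comp.congr_deriv (by push_cast; ring)
  have hh : Tendsto (fun t => (h t : ℂ)) atTop (𝓝 0) := by
    simpa using tendsto_ofReal_iff.mpr hvanish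
  obtain ⟨he0, hd0⟩ := tendsto_zero_of_hasDerivAt_hurwitz hk₁ hk₂ he hd hh
  exact ⟨tendsto_ofReal_iff.mp (by simpa using he0), tendsto_ofReal_iff.mp (by simpa using hd0)⟩

/-- Theorem 1 with the explicit Hurwitz condition: the extended disturbance
observer with gains `k₁ > 0`, `w k₂ > 0`, run against the plant
`ṡ = f_s(s)s + g_s(s)u_s + w d_s` with `ḋ_s = h(t)` continuous, bounded, and
vanishing, yields estimation errors `s - ŝ` and `d_s - d̂_s` converging to 0. -/
theorem extended_observer_convergence (k₁ k₂ w : ℝ)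
    (hk₁ : 0 < k₁) (hk₂ : 0 < w * k₂)
    (fs gs us s shat ds dhat h : ℝ → ℝ)
    (hcont : Continuous h) (hbdd : ∃ C, ∀ t, 0 ≤ t → |h t| ≤ C)
    (hvanish : Tendsto h atTop (nhds 0))
    (hds : ∀ t, 0 ≤ t → HasDerivAt ds (h t) t)
    (hplant : ∀ t, 0 ≤ t →
      HasDerivAt s (fs (s t) * s t + gs (s t) * us t + w * ds t) t)
    (hobs₁ : ∀ t, 0 ≤ t → HasDerivAt shat
      (fs (s t) * s t + gs (s t) * us t + w * dhat t + k₁ * (s t - shat t)) t)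
    (hobs₂ : ∀ t, 0 ≤ t → HasDerivAt dhat (k₂ * (s t - shat t)) t) :
    Tendsto (fun t => s t - shat t) atTop (nhds 0) ∧
      Tendsto (fun t => ds t - dhat t) atTop (nhds 0) :=
  extended_observer_convergence_general k₁ k₂ w hk₁ hk₂ fs gs us s shat ds dhat h hvanish hds hplant
    hobs₁ hobs₂
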